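/- Let A be a real n×n matrix, let Q and R be symmetric positive definite real n×n matrices, and suppose P₁ is a symmetric positive definite real n×n matrix solving the algebraic Riccati equation A·P₁ + P₁·Aᵀ + Q − P₁·R⁻¹·P₁ = 0; set F = P₁·R⁻¹. Let H be a real N×N matrix all of whose complex eigenvalues have strictly positive real part, and let σ_min > 0 denote the minimum of the real parts of the eigenvalues of H. Then for every real coupling gain c with c ≥ 1/(2·σ_min), the matrix M = I_N ⊗ A − c·(H ⊗ F) is Hurwitz. -/

import Mathlib

/-!
The matrix `I ⊗ A - c (H ⊗ F)` commutes with `H ⊗ I`, so over `ℂ` each of its eigenvalues `z`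
has an eigenvector that is also an eigenvector of `H ⊗ I`, for an eigenvalue `μ` of `H`; a nonzero
block of that vector is an eigenvector of `A - cμ F` for `z`. Conjugating the Riccati equation by
`P₁⁻¹` shows that `P₁⁻¹` is a Lyapunov matrix for `A - s F` as soon as `2 Re s ≥ 1`:
`-(P₁⁻¹ (A - s F) + (A - s F)ᴴ P₁⁻¹) = (2 Re s - 1) R⁻¹ + P₁⁻¹ Q P₁⁻¹` is positive definite.
Finally `2 Re (c μ) ≥ 2 c σmin ≥ 1`.
-/

open Matrix Kronecker

def IsHurwitz {m : Type*} [Fintype m] [DecidableEq m] (M : Matrix m m ℝ) : Prop :=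
  ∀ z ∈ spectrum ℂ (M.map Complex.ofReal), z.re < 0

open scoped ComplexOrder

theorem Module.End.exists_hasEigenvector_of_commute {K V : Type*} [Field K] [IsAlgClosed K]
    [AddCommGroup V] [Module K V] [FiniteDimensional K V] {f g : End K V} (hfg : Commute f g)
    {μ : K} (hμ : f.HasEigenvalue μ) : ∃ ν v, f.HasEigenvector μ v ∧ g.HasEigenvector ν v := by
  have hg : Set.MapsTo g (f.eigenspace μ) (f.eigenspace μ) := f.mapsTo_genEigenspace_of_comm hfg μ 1
  have : Nontrivial (f.eigenspace μ) := Submodule.nontrivial_iff_ne_bot.mpr hμ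
  obtain ⟨ν, hν⟩ := exists_eigenvalue (g.restrict hg)
  obtain ⟨⟨v, hvE⟩, hv⟩ := hν.exists_hasEigenvector
  have hv0 : v ≠ 0 := fun h => hv.2 (Subtype.ext h)
  exact ⟨ν, v, hasEigenvector_iff.mpr ⟨hvE, hv0⟩,
    hasEigenvector_iff.mpr ⟨mem_eigenspace_iff.mpr (congrArg Subtype.val hv.apply_eq_smul), hv0⟩⟩

namespace Matrix

section Spectrum

variable {m n K : Type*} [Fintype m] [Fintype n]

theorem mem_spectrum_iff_exists_mulVec_eq_smul [Field K] [DecidableEq n] {M : Matrix n n K}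
    {z : K} : z ∈ spectrum K M ↔ ∃ v ≠ 0, M *ᵥ v = z • v := by
  rw [← spectrum_toLin', ← Module.End.hasEigenvalue_iff_mem_spectrum]
  constructor
  · intro h
    obtain ⟨v, hv⟩ := h.exists_hasEigenvector
    exact ⟨v, hv.2, by simpa using hv.apply_eq_smul⟩
  · rintro ⟨v, hv, hMv⟩
    refine Module.End.hasEigenvalue_of_hasEigenvector (Module.End.hasEigenvector_iff.mpr ⟨?_, hv⟩)
    simpa [Module.End.mem_eigenspace_iff] using hMv

theorem exists_mulVec_eq_smul_of_commute [Field K] [IsAlgClosed K] [DecidableEq n]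
    {M G : Matrix n n K} (hMG : Commute M G) {z : K} (hz : z ∈ spectrum K M) :
    ∃ (μ : K) (v : n → K), v ≠ 0 ∧ M *ᵥ v = z • v ∧ G *ᵥ v = μ • v := by
  rw [← spectrum_toLin', ← Module.End.hasEigenvalue_iff_mem_spectrum] at hz
  obtain ⟨μ, v, hMv, hGv⟩ :=
    Module.End.exists_hasEigenvector_of_commute (hMG.map toLinAlgEquiv') hz
  exact ⟨μ, v, hMv.2, by simpa using hMv.apply_eq_smul, by simpa using hGv.apply_eq_smul⟩

theorem kronecker_one_mulVec_apply [CommSemiring K] [DecidableEq n] (H : Matrix m m K)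
    (v : m × n → K) (i : m) (p : n) :
    ((H ⊗ₖ (1 : Matrix n n K)) *ᵥ v) (i, p) = (H *ᵥ fun j => v (j, p)) i := by
  simp [mulVec, dotProduct, Fintype.sum_prod_type, one_apply]

theorem one_kronecker_mulVec_apply [CommSemiring K] [DecidableEq m] (B : Matrix n n K)
    (v : m × n → K) (i : m) (p : n) :
    (((1 : Matrix m m K) ⊗ₖ B) *ᵥ v) (i, p) = (B *ᵥ fun q => v (i, q)) p := by
  simp [mulVec, dotProduct, Fintype.sum_prod_type, one_apply]

theorem commute_one_kronecker_sub_kronecker_one [CommRing K] [DecidableEq m] [DecidableEq n]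
    (A F : Matrix n n K) (H : Matrix m m K) :
    Commute ((1 : Matrix m m K) ⊗ₖ A - H ⊗ₖ F) (H ⊗ₖ (1 : Matrix n n K)) := by
  refine Commute.sub_left ?_ ?_ <;> change _ * _ = _ * _ <;>
    simp only [← mul_kronecker_mul, Matrix.one_mul, Matrix.mul_one]

theorem exists_mem_spectrum_of_mem_spectrum_one_kronecker_sub [Field K] [IsAlgClosed K]
    [DecidableEq m] [DecidableEq n] {A F : Matrix n n K} {H : Matrix m m K} {z : K}
    (hz : z ∈ spectrum K ((1 : Matrix m m K) ⊗ₖ A - H ⊗ₖ F)) :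
    ∃ μ ∈ spectrum K H, z ∈ spectrum K (A - μ • F) := by
  obtain ⟨μ, v, hv, hzv, hμv⟩ :=
    exists_mulVec_eq_smul_of_commute (commute_one_kronecker_sub_kronecker_one A F H) hz
  obtain ⟨⟨i, p⟩, hip⟩ := Function.ne_iff.mp hv
  have hblock : (1 ⊗ₖ A) *ᵥ v - μ • ((1 ⊗ₖ F) *ᵥ v) = z • v := by
    rw [← hzv, sub_mulVec, ← mulVec_smul, ← hμv, mulVec_mulVec, ← mul_kronecker_mul,
      Matrix.one_mul, Matrix.mul_one]
  refine ⟨μ, mem_spectrum_iff_exists_mulVec_eq_smul.mpr ⟨fun j => v (j, p), ?_, ?_⟩,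
    mem_spectrum_iff_exists_mulVec_eq_smul.mpr ⟨fun q => v (i, q), ?_, ?_⟩⟩
  · exact fun h => hip (congrFun h i)
  · ext j
    simpa [kronecker_one_mulVec_apply] using congrFun hμv (j, p)
  · exact fun h => hip (congrFun h p)
  · ext q
    simpa [sub_mulVec, smul_mulVec, one_kronecker_mulVec_apply] using congrFun hblock (i, q)

end Spectrum

theorem map_ofReal_conjTranspose {m n : Type*} (X : Matrix m n ℝ) :
    (X.map ((↑) : ℝ → ℂ))ᴴ = Xᵀ.map ((↑) : ℝ → ℂ) := by
  rw [← conjTranspose_map _ (fun _ => (Complex.conj_ofReal _).symm),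
    conjTranspose_eq_transpose_of_trivial]

section Complexification

variable {n : Type*} [Fintype n] [DecidableEq n]

open scoped MatrixOrder in
theorem PosDef.map_ofReal {S : Matrix n n ℝ} (hS : S.PosDef) :
    (S.map ((↑) : ℝ → ℂ)).PosDef := by
  set B := CFC.sqrt S
  have hS_eq : S.map ((↑) : ℝ → ℂ) = (B.map ((↑) : ℝ → ℂ))ᴴ * B.map ((↑) : ℝ → ℂ) := by
    rw [← conjTranspose_map _ (fun _ => (Complex.conj_ofReal _).symm),
      (CFC.sqrt_nonneg S).posSemidef.isHermitian.eq]
    change S.map Complex.ofRealHom = B.map Complex.ofRealHom * B.map Complex.ofRealHom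
    rw [← Matrix.map_mul, CFC.sqrt_mul_sqrt_self S hS.posSemidef.nonneg]
  have hdet : (S.map ((↑) : ℝ → ℂ)).det ≠ 0 := by
    change (Complex.ofRealHom.mapMatrix S).det ≠ 0
    rw [← RingHom.map_det]
    exact Complex.ofReal_ne_zero.mpr hS.det_pos.ne'
  rw [hS_eq] at hdet ⊢
  exact (posSemidef_conjTranspose_mul_self _).posDef_iff_det_ne_zero.mpr hdet

theorem re_lt_zero_of_lyapunov {M P : Matrix n n ℂ} (hP : P.PosDef)
    (hL : (-(P * M + Mᴴ * P)).PosDef) {z : ℂ} (hz : z ∈ spectrum ℂ M) : z.re < 0 := by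
  obtain ⟨v, hv, hMv⟩ := mem_spectrum_iff_exists_mulVec_eq_smul.mp hz
  set q := star v ⬝ᵥ (P *ᵥ v)
  have hadj : star v ⬝ᵥ (Mᴴ *ᵥ (P *ᵥ v)) = star (M *ᵥ v) ⬝ᵥ (P *ᵥ v) := by
    rw [dotProduct_mulVec, star_mulVec]
  have hlyap : star v ⬝ᵥ ((P * M + Mᴴ * P) *ᵥ v) = (z + star z) * q := by
    rw [add_mulVec, ← mulVec_mulVec, ← mulVec_mulVec, dotProduct_add, hadj, hMv, mulVec_smul,
      star_smul, dotProduct_smul, smul_dotProduct, smul_eq_mul, smul_eq_mul, add_mul]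
  have hneg := hL.dotProduct_mulVec_pos hv
  rw [neg_mulVec, dotProduct_neg, hlyap, Complex.star_def, Complex.add_conj, neg_pos] at hneg
  obtain ⟨hq_re, -⟩ := Complex.lt_def.mp (hP.dotProduct_mulVec_pos hv)
  have hneg_re := (Complex.lt_def.mp hneg).1
  simp only [Complex.mul_re, Complex.ofReal_re, Complex.ofReal_im, Complex.zero_re] at hneg_re hq_re
  nlinarith

end Complexification

end Matrix

section Riccati

variable {n : Type*} [Fintype n] [DecidableEq n] {A Q R P : Matrix n n ℝ}

theorem inv_mul_add_transpose_mul_inv_of_riccati (hP : IsUnit P.det)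
    (hRic : A * P + P * Aᵀ + Q - P * R⁻¹ * P = 0) :
    P⁻¹ * A + Aᵀ * P⁻¹ + P⁻¹ * Q * P⁻¹ = R⁻¹ := by
  have h := congrArg (fun X => P⁻¹ * X * P⁻¹) hRic
  simp only [Matrix.mul_sub, Matrix.sub_mul, Matrix.mul_add, Matrix.add_mul, Matrix.mul_assoc,
    mul_nonsing_inv _ hP, nonsing_inv_mul_cancel_left _ _ hP, Matrix.mul_one, Matrix.mul_zero,
    Matrix.zero_mul, sub_eq_zero] at h
  simpa only [Matrix.mul_assoc] using h

theorem lyapunov_eq_of_riccati (hR : R.IsHermitian) (hP : P.PosDef)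
    (hRic : A * P + P * Aᵀ + Q - P * R⁻¹ * P = 0) (s : ℂ) :
    -((P⁻¹).map ((↑) : ℝ → ℂ) * (A.map (↑) - s • (P * R⁻¹).map (↑)) +
        (A.map (↑) - s • (P * R⁻¹).map (↑))ᴴ * (P⁻¹).map (↑)) =
      (2 * s.re - 1 : ℝ) • (R⁻¹).map ((↑) : ℝ → ℂ) + (P⁻¹ * Q * P⁻¹).map (↑) := by
  have hPu : IsUnit P.det := hP.det_pos.ne'.isUnit
  have hF : P⁻¹ * (P * R⁻¹) = R⁻¹ := by rw [nonsing_inv_mul_cancel_left _ _ hPu]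
  have hFt : (P * R⁻¹)ᵀ * P⁻¹ = R⁻¹ := by
    rw [transpose_mul, ← conjTranspose_eq_transpose_of_trivial,
      ← conjTranspose_eq_transpose_of_trivial, hR.inv.eq, hP.isHermitian.eq, Matrix.mul_assoc,
      mul_nonsing_inv _ hPu, Matrix.mul_one]
  have hARE := congrArg (·.map ((↑) : ℝ → ℂ)) (inv_mul_add_transpose_mul_inv_of_riccati hPu hRic)
  have hmul (X Y : Matrix n n ℝ) : X.map (↑) * Y.map (↑) = (X * Y).map ((↑) : ℝ → ℂ) :=
    (Matrix.map_mul (f := Complex.ofRealHom)).symm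
  simp only [Matrix.map_add _ Complex.ofReal_add] at hARE
  rw [conjTranspose_sub, conjTranspose_smul, map_ofReal_conjTranspose, map_ofReal_conjTranspose,
    Matrix.mul_sub, Matrix.sub_mul, Matrix.mul_smul, Matrix.smul_mul, hmul, hmul, hmul, hmul, hF,
    hFt, ← hARE, Complex.star_def, eq_sub_of_add_eq' (Complex.add_conj s)]
  module

theorem re_lt_zero_of_mem_spectrum_of_riccati (hQ : Q.PosDef) (hR : R.PosDef) (hP : P.PosDef)
    (hRic : A * P + P * Aᵀ + Q - P * R⁻¹ * P = 0) {s : ℂ} (hs : 1 ≤ 2 * s.re) {z : ℂ}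
    (hz : z ∈ spectrum ℂ (A.map ((↑) : ℝ → ℂ) - s • (P * R⁻¹).map (↑))) : z.re < 0 := by
  refine re_lt_zero_of_lyapunov hP.inv.map_ofReal ?_ hz
  rw [lyapunov_eq_of_riccati hR.isHermitian hP hRic]
  have hPQP : (P⁻¹ * Q * P⁻¹).PosDef := by
    simpa only [hP.inv.isHermitian.eq] using
      hQ.conjTranspose_mul_mul_same (mulVec_injective_iff_isUnit.mpr hP.inv.isUnit)
  exact PosDef.posSemidef_add (hR.inv.map_ofReal.posSemidef.smul (sub_nonneg.mpr hs))
    hPQP.map_ofReal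

end Riccati

/-- the paper's Lemma 3 combined with its Lemma 2: with
`F = P₁ * R⁻¹` obtained from the algebraic Riccati equation, and `H` a real
matrix whose eigenvalues all have positive real part with minimal real part
`σmin > 0`, the matrix `I_N ⊗ A - c • (H ⊗ F)` is Hurwitz for every coupling
gain `c ≥ 1 / (2 * σmin)`. -/
theorem kronecker_observer_hurwitz {n N : ℕ}
    (A Q R P₁ : Matrix (Fin n) (Fin n) ℝ)
    (hQ : Q.PosDef) (hR : R.PosDef) (hP : P₁.PosDef)
    (hRic : A * P₁ + P₁ * Aᵀ + Q - P₁ * R⁻¹ * P₁ = 0)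
    (H : Matrix (Fin N) (Fin N) ℝ) (σmin : ℝ) (hσpos : 0 < σmin)
    (hσ : IsLeast (Complex.re '' spectrum ℂ (H.map Complex.ofReal)) σmin)
    (c : ℝ) (hc : 1 / (2 * σmin) ≤ c) :
    IsHurwitz ((1 : Matrix (Fin N) (Fin N) ℝ) ⊗ₖ A - c • (H ⊗ₖ (P₁ * R⁻¹))) := by
  intro z hz
  have hmap : ((1 : Matrix (Fin N) (Fin N) ℝ) ⊗ₖ A - c • (H ⊗ₖ (P₁ * R⁻¹))).map Complex.ofReal =
      1 ⊗ₖ A.map (↑) - H.map (↑) ⊗ₖ ((c : ℂ) • (P₁ * R⁻¹).map (↑)) := by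
    ext ⟨i, p⟩ ⟨j, q⟩
    by_cases hij : i = j <;> simp [one_apply, hij] <;> ring
  rw [hmap] at hz
  obtain ⟨μ, hμ, hzμ⟩ := exists_mem_spectrum_of_mem_spectrum_one_kronecker_sub hz
  rw [smul_smul] at hzμ
  have hσμ : σmin ≤ μ.re := hσ.2 ⟨μ, hμ, rfl⟩
  have hc' : 1 ≤ 2 * σmin * c := by rwa [div_le_iff₀ (by positivity), mul_comm] at hc
  refine re_lt_zero_of_mem_spectrum_of_riccati hQ hR hP hRic ?_ hzμ
  simp only [Complex.mul_re, Complex.ofReal_re, Complex.ofReal_im, mul_zero, sub_zero]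
  nlinarith
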